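/- There exists a universal constant C > 0 such that for every integer N ≥ 1, every L > 0 and all x₁, x₂, x₃, x₄ ∈ [0,L], the 4×4 determinant ρ^{(4)}(x₁,x₂,x₃,x₄) := det( γ(x_i, x_j) )_{i,j=1}^{4} satisfies |ρ^{(4)}(x₁,x₂,x₃,x₄)| ≤ C·ρ⁸·(x₁ − x₂)²·(x₃ − x₄)², where ρ := N/L and γ(x,y) := (2/L)·Σ_{j=1}^{N} sin(πjx/L)·sin(πjy/L). -/

import Mathlib

open MeasureTheory Real

noncomputable section

/-- The one-body reduced density matrix of the Dirichlet free Fermi ground state on `[0,L]`. -/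
def fermiKernel (N : ℕ) (L : ℝ) (x y : ℝ) : ℝ :=
  (2 / L) * ∑ j ∈ Finset.Icc 1 N,
    Real.sin (π * (j : ℝ) * x / L) * Real.sin (π * (j : ℝ) * y / L)

/-!
The kernel factors as `γ = (2/L) Φ Φᵀ` with `Φ i j = sin (π j xᵢ / L)`, so `ρ⁽⁴⁾` is `(2/L)⁴` times
a Gram determinant. Subtracting the second row of `Φ` from the first and the fourth from the third
leaves that Gram determinant unchanged, and since `sin` is 1-Lipschitz and `j ≤ N` the new rows are
bounded by `πρ|x₁ - x₂|` and `πρ|x₃ - x₄|`, the other two by `1`. Every entry of the new Gram matrix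
is then at most `N` times the product of its two row bounds, and expanding the determinant over the
`4!` permutations gives the claim with `C = 4! · 2⁴ · π⁴`.
-/

open Matrix Finset Equiv
open scoped Nat

namespace Matrix

variable {R S : Type*} [CommRing R] [CommRing S] [LinearOrder S] [IsStrictOrderedRing S]
  {n ι : Type*} [Fintype n] [DecidableEq n] [Fintype ι]

theorem det_transvection_mul_mul_transpose {i j : n} (hij : i ≠ j) (c : R) (V : Matrix n ι R) :
    det ((transvection i j c * V) * (transvection i j c * V)ᵀ) = det (V * Vᵀ) := by
  rw [transpose_mul, ← Matrix.mul_assoc, Matrix.mul_assoc _ V, det_mul, det_mul, det_transpose,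
    det_transvection_of_ne i j hij, one_mul, mul_one]

theorem det_le_prod_mul_prod [Nontrivial R] {A : Matrix n n R} {abv : AbsoluteValue R S}
    {b c : n → S} (h : ∀ i j, abv (A i j) ≤ b i * c j) :
    abv A.det ≤ (Fintype.card n)! * ((∏ i, b i) * ∏ j, c j) :=
  calc
    abv A.det ≤ ∑ σ : Perm n, abv (Perm.sign σ • ∏ i, A (σ i) i) := by
      rw [det_apply]; exact abv.sum_le _ _
    _ = ∑ σ : Perm n, ∏ i, abv (A (σ i) i) :=
      sum_congr rfl fun σ _ => by rw [abv.map_units_int_smul, abv.map_prod]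
    _ ≤ ∑ σ : Perm n, ∏ i, b (σ i) * c i :=
      sum_le_sum fun σ _ => prod_le_prod (fun i _ => abv.nonneg _) fun i _ => h _ _
    _ = ∑ _σ : Perm n, (∏ i, b i) * ∏ j, c j :=
      sum_congr rfl fun σ _ => by rw [prod_mul_distrib, Equiv.prod_comp σ b]
    _ = (Fintype.card n)! * ((∏ i, b i) * ∏ j, c j) := by
      simp [Fintype.card_perm]

variable [LinearOrder R] [IsStrictOrderedRing R]

theorem abs_det_mul_transpose_le (V : Matrix n ι R) (b : n → R) (h : ∀ i j, |V i j| ≤ b i) :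
    |det (V * Vᵀ)| ≤ (Fintype.card n)! * (Fintype.card ι : R) ^ Fintype.card n * ∏ i, b i ^ 2 := by
  have hentry : ∀ i k, |(V * Vᵀ) i k| ≤ (Fintype.card ι * b i) * b k := fun i k =>
    calc
      |(V * Vᵀ) i k| ≤ ∑ j, |V i j| * |V k j| := by
        simpa [mul_apply, abs_mul] using abs_sum_le_sum_abs (fun j => V i j * V k j) univ
      _ ≤ ∑ _j : ι, b i * b k := sum_le_sum fun j _ =>
        mul_le_mul (h i j) (h k j) (abs_nonneg _) ((abs_nonneg _).trans (h i j))
      _ = (Fintype.card ι * b i) * b k := by simp [mul_assoc]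
  calc
    |det (V * Vᵀ)| ≤ (Fintype.card n)! * ((∏ i, (Fintype.card ι * b i)) * ∏ k, b k) :=
      det_le_prod_mul_prod (abv := AbsoluteValue.abs) hentry
    _ = _ := by simp [prod_mul_distrib, sq, mul_assoc]

end Matrix

def sineModes (N : ℕ) (L : ℝ) {m : Type*} (x : m → ℝ) : Matrix m (Finset.Icc 1 N) ℝ :=
  of fun i j => sin (π * ((j : ℕ) : ℝ) * x i / L)

theorem of_fermiKernel_eq_smul_sineModes_mul_transpose (N : ℕ) (L : ℝ) {m : Type*} [Fintype m]
    (x : m → ℝ) :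
    of (fun i k => fermiKernel N L (x i) (x k)) =
      (2 / L) • (sineModes N L x * (sineModes N L x)ᵀ) := by
  ext i k
  simp only [of_apply, Matrix.smul_apply, mul_apply, transpose_apply, sineModes, smul_eq_mul,
    fermiKernel]
  congr 1
  exact (sum_coe_sort (Icc 1 N) _).symm

theorem abs_sin_sub_sin_mode_le {N j : ℕ} (hj : j ≤ N) {L : ℝ} (hL : 0 < L) (x y : ℝ) :
    |sin (π * j * x / L) - sin (π * j * y / L)| ≤ π * N / L * |x - y| := by
  refine (abs_sin_sub_sin_le _ _).trans ?_
  rw [show π * j * x / L - π * j * y / L = π * j / L * (x - y) by ring, abs_mul,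
    abs_of_nonneg (by positivity)]
  gcongr

/-- Bound on the four-body reduced density of the free Fermi ground state. -/
theorem statement_15 :
    ∃ C : ℝ, 0 < C ∧
      ∀ (N : ℕ) (L : ℝ), 1 ≤ N → 0 < L →
        ∀ x₁ x₂ x₃ x₄ : ℝ, x₁ ∈ Set.Icc (0 : ℝ) L → x₂ ∈ Set.Icc (0 : ℝ) L →
          x₃ ∈ Set.Icc (0 : ℝ) L → x₄ ∈ Set.Icc (0 : ℝ) L →
          |Matrix.det (Matrix.of fun i j : Fin 4 =>
              fermiKernel N L (![x₁, x₂, x₃, x₄] i) (![x₁, x₂, x₃, x₄] j))| ≤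
            C * ((N : ℝ) / L) ^ 8 * (x₁ - x₂) ^ 2 * (x₃ - x₄) ^ 2 := by
  refine ⟨384 * π ^ 4, by positivity, ?_⟩
  intro N L _ hL x₁ x₂ x₃ x₄ _ _ _ _
  set Φ : Matrix (Fin 4) (Icc 1 N) ℝ := sineModes N L ![x₁, x₂, x₃, x₄]
  set Ψ : Matrix (Fin 4) (Icc 1 N) ℝ :=
    transvection (2 : Fin 4) 3 (-1 : ℝ) * (transvection (0 : Fin 4) 1 (-1 : ℝ) * Φ)
  set b : Fin 4 → ℝ := ![π * N / L * |x₁ - x₂|, 1, π * N / L * |x₃ - x₄|, 1]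
  have hgram : det (Φ * Φᵀ) = det (Ψ * Ψᵀ) := by
    rw [det_transvection_mul_mul_transpose (by decide : (2 : Fin 4) ≠ 3),
      det_transvection_mul_mul_transpose (by decide : (0 : Fin 4) ≠ 1)]
  have hrows : ∀ i j, |Ψ i j| ≤ b i := by
    intro i j
    have hj : (j : ℕ) ≤ N := (mem_Icc.1 j.2).2
    fin_cases i <;>
      simp [Ψ, Φ, b, sineModes, ← sub_eq_add_neg, abs_sin_le_one, abs_sin_sub_sin_mode_le hj hL]
  rw [of_fermiKernel_eq_smul_sineModes_mul_transpose, det_smul, hgram, abs_mul, Fintype.card_fin,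
    abs_of_pos (by positivity)]
  calc (2 / L) ^ 4 * |det (Ψ * Ψᵀ)| ≤ (2 / L) ^ 4 * (4 ! * N ^ 4 * ∏ i, b i ^ 2) := by
        gcongr
        simpa using abs_det_mul_transpose_le Ψ b hrows
    _ = 384 * π ^ 4 * ((N : ℝ) / L) ^ 8 * (x₁ - x₂) ^ 2 * (x₃ - x₄) ^ 2 := by
        simp [b, Fin.prod_univ_four, Nat.factorial, mul_pow, sq_abs]
        ring
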